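/- Let a, c be odd natural numbers with a, c ≥ 3, let b be a positive even natural number, and let d be a positive even natural number. If max(v₂(c+1), v₂(c−1)) + v₂(d) < max(v₂(a+1), v₂(a−1)) + 1, then v₂(a^b − c^d) = max(v₂(c+1), v₂(c−1)) + v₂(d) (the difference a^b − c^d being taken in ℤ). -/

import Mathlib

/-!
By the lifting-the-exponent lemma, `v₂(x ^ n - 1) + 1 = v₂(x + 1) + v₂(x - 1) + v₂(n)` for odd `x`
and even `n`; as `x + 1` and `x - 1` differ by `2`, one of them has valuation exactly `1`, so
`v₂(x ^ n - 1) = max (v₂(x + 1)) (v₂(x - 1)) + v₂(n)`. Since `v₂(b) ≥ 1`, the hypothesis says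
`v₂(c ^ d - 1) < v₂(a ^ b - 1)`, and the ultrametric inequality applied to
`a ^ b - c ^ d = (a ^ b - 1) - (c ^ d - 1)` gives the smaller valuation.
-/

theorem padicValInt_sub_eq_of_lt {p : ℕ} [Fact p.Prime] {x y : ℤ} (hy : y ≠ 0)
    (hlt : padicValInt p y < padicValInt p x) :
    padicValInt p (x - y) = padicValInt p y := by
  have hx : x ≠ 0 := by
    rintro rfl
    simp at hlt
  have hxy : -(y : ℚ) + x ≠ 0 := by
    rintro hxy
    have : x = y := by exact_mod_cast (by linarith : (x : ℚ) = y)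
    simp [this] at hlt
  have key := padicValRat.add_eq_of_lt (p := p) hxy (by simpa using hy) (by simpa using hx)
    (by rwa [padicValRat.neg, padicValRat.of_int, padicValRat.of_int, Nat.cast_lt])
  rw [padicValRat.neg, show -(y : ℚ) + x = ((x - y : ℤ) : ℚ) by push_cast; ring,
    padicValRat.of_int, padicValRat.of_int, Nat.cast_inj] at key
  exact key

theorem min_padicValNat_two_add_one_sub_one {x : ℕ} (hx : Odd x) (h1x : 1 < x) :
    min (padicValNat 2 (x + 1)) (padicValNat 2 (x - 1)) = 1 := by
  obtain ⟨k, rfl⟩ := hx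
  have hplus : 1 ≤ padicValNat 2 (2 * k + 1 + 1) :=
    one_le_padicValNat_of_dvd (by omega) ⟨k + 1, by ring⟩
  have hminus : 1 ≤ padicValNat 2 (2 * k + 1 - 1) :=
    one_le_padicValNat_of_dvd (by omega) ⟨k, by omega⟩
  by_contra hne
  have four_dvd {m : ℕ} (hm : 2 ≤ padicValNat 2 m) : 4 ∣ m :=
    (pow_dvd_pow 2 hm).trans pow_padicValNat_dvd
  have h₁ := four_dvd (m := 2 * k + 1 + 1) (by omega)
  have h₂ := four_dvd (m := 2 * k + 1 - 1) (by omega)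
  omega

theorem padicValNat_two_pow_sub_one {x n : ℕ} (hx : Odd x) (h1x : 1 < x) (hn : n ≠ 0)
    (hneven : Even n) :
    padicValNat 2 (x ^ n - 1) =
      max (padicValNat 2 (x + 1)) (padicValNat 2 (x - 1)) + padicValNat 2 n := by
  have hlte := padicValNat.pow_two_sub_one h1x hx.not_two_dvd_nat hn hneven
  have hsum := min_add_max (padicValNat 2 (x + 1)) (padicValNat 2 (x - 1))
  rw [min_padicValNat_two_add_one_sub_one hx h1x] at hsum
  omega

theorem stmt_2 (a c b d : ℕ) (ha : Odd a) (hc : Odd c) (ha3 : 3 ≤ a) (hc3 : 3 ≤ c)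
    (hb : Even b) (hb0 : 0 < b) (hd : Even d) (hd0 : 0 < d)
    (h : max (padicValNat 2 (c + 1)) (padicValNat 2 (c - 1)) + padicValNat 2 d <
      max (padicValNat 2 (a + 1)) (padicValNat 2 (a - 1)) + 1) :
    padicValInt 2 ((a : ℤ) ^ b - (c : ℤ) ^ d) =
      max (padicValNat 2 (c + 1)) (padicValNat 2 (c - 1)) + padicValNat 2 d := by
  have hA := padicValNat_two_pow_sub_one ha (by omega) hb0.ne' hb
  have hC := padicValNat_two_pow_sub_one hc (by omega) hd0.ne' hd
  have hvb : 1 ≤ padicValNat 2 b := one_le_padicValNat_of_dvd hb0.ne' hb.two_dvd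
  have hab : 1 < a ^ b := Nat.one_lt_pow hb0.ne' (by omega)
  have hcd : 1 < c ^ d := Nat.one_lt_pow hd0.ne' (by omega)
  have hsplit : (a : ℤ) ^ b - (c : ℤ) ^ d = ((a ^ b - 1 : ℕ) : ℤ) - ((c ^ d - 1 : ℕ) : ℤ) := by
    push_cast [hab.le, hcd.le]
    ring
  rw [hsplit, padicValInt_sub_eq_of_lt (by omega), padicValInt.of_nat, hC]
  rw [padicValInt.of_nat, padicValInt.of_nat]
  omega
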